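/- arXiv:2301.04828 — 4 statements merged into one kernel-verified Lean document; each statement's English description precedes it below -/
import Mathlib

section
/- Gradient formula for the QC log posterior: for symmetric positive definite Σ, the derivative of ℓ(Σ) = (n/2)·log det(Σ⁻¹) − (n/2)·tr(S Σ⁻¹) − (1/4)·tr(Σ⁻¹(Θ ∘ Σ⁻¹)) in the direction of a symmetric matrix H equals (n/2)·tr(Σ⁻¹[−Σ + S + (1/n)(Σ⁻¹ ∘ Θ)]Σ⁻¹ H), where Θ is symmetric. -/
/-!
Along the line `t ↦ A + t • H` the inverse has derivative `-(A⁻¹ * H * A⁻¹)`, and since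
`det (1 + t • M) = 1 + t * trace M + O(t²)`, `log det (A + t • H)⁻¹` has derivative
`-trace (A⁻¹ * H)`. For symmetric `Θ` the form `(X, Y) ↦ trace (X * (Θ ⊙ Y))` is symmetric, so
the quadratic term has derivative `2 * trace ((A⁻¹ ⊙ Θ) * X')`, `X'` being that of the inverse.
By cyclicity of the trace the three contributions add up to
`(n / 2) * trace (G * (A⁻¹ * H * A⁻¹))` with `G = -A + S + (1 / n) • (A⁻¹ ⊙ Θ)`, which is
`(n / 2) * trace (A⁻¹ * G * A⁻¹ * H)`.
-/

open Matrix Real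

namespace Matrix

variable {n : Type*} [Fintype n]

theorem IsSymm.trace_mul_hadamard {α : Type*} [CommSemiring α] {Θ : Matrix n n α}
    (hΘ : Θ.IsSymm) (B K : Matrix n n α) : (B * (Θ ⊙ K)).trace = ((B ⊙ Θ) * K).trace := by
  simp only [trace, diag, mul_apply, hadamard_apply]
  refine Finset.sum_congr rfl fun i _ => Finset.sum_congr rfl fun j _ => ?_
  rw [hΘ.apply j i]
  ring

variable [DecidableEq n]

section Det

variable {𝕜 : Type*} [NontriviallyNormedField 𝕜]

theorem hasDerivAt_det_one_add_smul (M : Matrix n n 𝕜) :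
    HasDerivAt (fun t : 𝕜 => (1 + t • M).det) M.trace 0 := by
  have h := (det (1 + (Polynomial.X : Polynomial 𝕜) • M.map Polynomial.C)).hasDerivAt 0
  rw [derivative_det_one_add_X_smul] at h
  refine h.congr_of_eventuallyEq (Filter.Eventually.of_forall fun t => ?_)
  dsimp only
  rw [← Polynomial.coe_evalRingHom, RingHom.map_det]
  congr 1
  ext i j
  simp only [RingHom.mapMatrix_apply, Polynomial.coe_evalRingHom, Matrix.map_apply,
    Matrix.add_apply, Matrix.one_apply, Matrix.smul_apply, smul_eq_mul, Polynomial.eval_add,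
    apply_ite, Polynomial.eval_one, Polynomial.eval_zero, Polynomial.eval_mul, Polynomial.eval_C,
    Polynomial.eval_X]

theorem hasDerivAt_det_add_smul {A : Matrix n n 𝕜} (hA : IsUnit A.det) (H : Matrix n n 𝕜) :
    HasDerivAt (fun t : 𝕜 => (A + t • H).det) (A.det * (A⁻¹ * H).trace) 0 := by
  have factor (t : 𝕜) : A + t • H = A * (1 + t • (A⁻¹ * H)) := by
    rw [Matrix.mul_add, mul_one, Matrix.mul_smul, mul_nonsing_inv_cancel_left _ _ hA]
  simp only [factor, det_mul]
  exact (hasDerivAt_det_one_add_smul _).const_mul _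

end Det

theorem hasDerivAt_log_det_inv_add_smul {A : Matrix n n ℝ} (hA : IsUnit A.det)
    (H : Matrix n n ℝ) :
    HasDerivAt (fun t : ℝ => Real.log (A + t • H)⁻¹.det) (-(A⁻¹ * H).trace) 0 := by
  simp only [det_nonsing_inv, Ring.inverse_eq_inv', Real.log_inv]
  refine ((hasDerivAt_det_add_smul hA H).log (by simpa using hA.ne_zero)).neg.congr_deriv ?_
  simp [hA.ne_zero]

/- `HasDerivAt` for matrix-valued maps refers only to the product topology on matrices; each of
the norms below induces that topology definitionally and is chosen locally just to reach the
normed-space calculus lemmas. -/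
section LinftyOp

attribute [local instance] Matrix.linftyOpNormedRing Matrix.linftyOpNormedAlgebra

variable {𝕜 : Type*} [RCLike 𝕜]

theorem hasDerivAt_inv_add_smul {A : Matrix n n 𝕜} (hA : IsUnit A.det) (H : Matrix n n 𝕜) :
    HasDerivAt (fun t : 𝕜 => (A + t • H)⁻¹) (-(A⁻¹ * H * A⁻¹)) 0 := by
  obtain ⟨u, rfl⟩ := (isUnit_iff_isUnit_det A).mpr hA
  have hline : HasDerivAt (fun t : 𝕜 => (u : Matrix n n 𝕜) + t • H) H 0 :=
    (((hasDerivAt_id (0 : 𝕜)).smul_const H).const_add _).congr_deriv (one_smul 𝕜 H)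
  have h := (hasFDerivAt_ringInverse (𝕜 := 𝕜) u).comp_hasDerivAt_of_eq 0 hline (by simp)
  simp only [Function.comp_def, ← nonsing_inv_eq_ringInverse, coe_units_inv, _root_.neg_apply,
    ContinuousLinearMap.mulLeftRight_apply] at h
  exact h

variable {M N : 𝕜 → Matrix n n 𝕜} {M' N' : Matrix n n 𝕜} {x : 𝕜}

theorem _root_.HasDerivAt.const_matrix_mul (S : Matrix n n 𝕜) (hM : HasDerivAt M M' x) :
    HasDerivAt (fun t => S * M t) (S * M') x :=
  hM.const_mul S

theorem _root_.HasDerivAt.matrix_mul (hM : HasDerivAt M M' x) (hN : HasDerivAt N N' x) :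
    HasDerivAt (fun t => M t * N t) (M' * N x + M x * N') x :=
  hM.mul hN

end LinftyOp

section Sup

attribute [local instance] Matrix.normedAddCommGroup Matrix.normedSpace

variable {𝕜 : Type*} [RCLike 𝕜] {m p : Type*} [Fintype m] [Fintype p] {x : 𝕜}

theorem _root_.HasDerivAt.matrix_hadamard_left {M : 𝕜 → Matrix m p 𝕜} {M' : Matrix m p 𝕜}
    (Θ : Matrix m p 𝕜) (hM : HasDerivAt M M' x) :
    HasDerivAt (fun t => Θ ⊙ M t) (Θ ⊙ M') x :=
  let L : Matrix m p 𝕜 →ₗ[𝕜] Matrix m p 𝕜 :=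
    { toFun := (Θ ⊙ ·), map_add' := fun B C => hadamard_add Θ B C,
      map_smul' := fun c B => hadamard_smul Θ B c }
  L.toContinuousLinearMap.hasFDerivAt.comp_hasDerivAt x hM

theorem _root_.HasDerivAt.matrix_trace {M : 𝕜 → Matrix m m 𝕜} {M' : Matrix m m 𝕜}
    (hM : HasDerivAt M M' x) : HasDerivAt (fun t => (M t).trace) M'.trace x :=
  (traceLinearMap m 𝕜 𝕜).toContinuousLinearMap.hasFDerivAt.comp_hasDerivAt x hM

end Sup

end Matrix

theorem qc_directional_derivative_general (d : ℕ) (n : ℝ) (hn : 0 < n)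
    (S Θ : Matrix (Fin d) (Fin d) ℝ) (hΘsymm : Θ.IsSymm)
    (ℓ : Matrix (Fin d) (Fin d) ℝ → ℝ)
    (hℓ : ∀ A : Matrix (Fin d) (Fin d) ℝ,
      ℓ A = (n / 2) * Real.log (A⁻¹).det - (n / 2) * (S * A⁻¹).trace
        - (1 / 4) * (A⁻¹ * Matrix.hadamard Θ A⁻¹).trace)
    (A H : Matrix (Fin d) (Fin d) ℝ) (hA : A.PosDef) :
    HasDerivAt (fun t : ℝ => ℓ (A + t • H))
      ((n / 2) * (A⁻¹ * (-A + S + (1 / n) • Matrix.hadamard A⁻¹ Θ) * A⁻¹ * H).trace)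
      0 := by
  have hA' : IsUnit A.det := hA.det_pos.ne'.isUnit
  have hM := hasDerivAt_inv_add_smul hA' H
  have hS := (hM.const_matrix_mul S).matrix_trace
  have hQ := (hM.matrix_mul (hM.matrix_hadamard_left Θ)).matrix_trace
  simp only [hℓ]
  refine (((hasDerivAt_log_det_inv_add_smul hA' H).const_mul (n / 2)).fun_sub
    (hS.const_mul (n / 2)) |>.fun_sub (hQ.const_mul (1 / 4))).congr_deriv ?_
  set K := A⁻¹ * H * A⁻¹
  have hcyc (G : Matrix (Fin d) (Fin d) ℝ) : (A⁻¹ * G * A⁻¹ * H).trace = (G * K).trace := by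
    simp only [K, Matrix.mul_assoc]
    rw [trace_mul_comm]
    simp only [Matrix.mul_assoc]
  have hlog : (A⁻¹ * H).trace = (A * K).trace := by
    have hAK : A * K = H * A⁻¹ := by
      simp only [K, Matrix.mul_assoc, mul_nonsing_inv_cancel_left _ _ hA']
    rw [hAK, trace_mul_comm]
  have hquad (X : Matrix (Fin d) (Fin d) ℝ) :
      (X * Θ ⊙ A⁻¹ + A⁻¹ * Θ ⊙ X).trace = 2 * ((A⁻¹ ⊙ Θ) * X).trace := by
    rw [trace_add, hΘsymm.trace_mul_hadamard A⁻¹ X, trace_mul_comm X, hadamard_comm Θ]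
    ring
  rw [zero_smul, add_zero, hquad]
  simp only [hcyc, hlog, mul_neg, trace_neg, add_mul, neg_mul, smul_mul, trace_add, trace_smul,
    smul_eq_mul]
  field_simp [hn.ne']
  ring

/-- Gradient formula for the QC log posterior: for positive definite `A` and
symmetric direction `H`, the derivative at `t = 0` of
`t ↦ ℓ(A + t·H)` with `ℓ(A) = (n/2)·log det A⁻¹ − (n/2)·tr(S A⁻¹) − (1/4)·tr(A⁻¹(Θ ∘ A⁻¹))`
equals `(n/2)·tr(A⁻¹[−A + S + (1/n)(A⁻¹ ∘ Θ)]A⁻¹ H)`. -/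
theorem qc_directional_derivative (d : ℕ) (n : ℝ) (hn : 0 < n)
    (S Θ : Matrix (Fin d) (Fin d) ℝ) (hSsymm : S.IsSymm) (hΘsymm : Θ.IsSymm)
    (ℓ : Matrix (Fin d) (Fin d) ℝ → ℝ)
    (hℓ : ∀ A : Matrix (Fin d) (Fin d) ℝ,
      ℓ A = (n / 2) * Real.log (A⁻¹).det - (n / 2) * (S * A⁻¹).trace
        - (1 / 4) * (A⁻¹ * Matrix.hadamard Θ A⁻¹).trace)
    (A H : Matrix (Fin d) (Fin d) ℝ) (hA : A.PosDef) (hH : H.IsSymm) :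
    HasDerivAt (fun t : ℝ => ℓ (A + t • H))
      ((n / 2) * (A⁻¹ * (-A + S + (1 / n) • Matrix.hadamard A⁻¹ Θ) * A⁻¹ * H).trace)
      0 :=
  qc_directional_derivative_general d n hn S Θ hΘsymm ℓ hℓ A H hA
end

section
/- Determinant–diagonal likelihood bound: for any positive definite d×d matrix Σ and positive reals s_1,...,s_d, one has (n/2)·log det(Σ⁻¹) − (n/2)·∑_{i=1}^d s_i·(Σ⁻¹)_{ii} ≤ (n/2)·∑_{i=1}^d (−log s_i − 1). -/
/-!
Put `r i = √(s i)` and `C = diag(r) · A⁻¹ · diag(r)`, again positive definite. Its eigenvalues `λ`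
satisfy `log λ ≤ λ - 1`, so `log det C ≤ tr C - d`; since `det C = (∏ s i) · det A⁻¹` and
`C i i = s i · A⁻¹ i i`, this is the claimed bound (before scaling by `n / 2 ≥ 0`).
-/

open Matrix Real

namespace Matrix.PosDef

variable {ι : Type*} [Fintype ι] [DecidableEq ι]

theorem log_det_le_trace_sub_card {C : Matrix ι ι ℝ} (hC : C.PosDef) :
    log C.det ≤ C.trace - Fintype.card ι := by
  have heig := hC.eigenvalues_pos
  rw [hC.isHermitian.det_eq_prod_eigenvalues, hC.isHermitian.trace_eq_sum_eigenvalues]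
  simp only [RCLike.ofReal_real_eq_id, id]
  rw [log_prod fun i _ => (heig i).ne', Fintype.card_eq_sum_ones, Nat.cast_sum, Nat.cast_one,
    ← Finset.sum_sub_distrib]
  exact Finset.sum_le_sum fun i _ => log_le_sub_one_of_pos (heig i)

theorem diagonal_mul_mul_diagonal {B : Matrix ι ι ℝ} (hB : B.PosDef) {r : ι → ℝ}
    (hr : ∀ i, 0 < r i) : (diagonal r * B * diagonal r).PosDef := by
  have hunit : IsUnit (diagonal r) :=
    isUnit_diagonal.mpr (Pi.isUnit_iff.mpr fun i => (hr i).ne'.isUnit)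
  simpa using hB.conjTranspose_mul_mul_same (mulVec_injective_iff_isUnit.mpr hunit)

theorem log_det_sub_sum_mul_diag_le {B : Matrix ι ι ℝ} (hB : B.PosDef) {s : ι → ℝ}
    (hs : ∀ i, 0 < s i) :
    log B.det - ∑ i, s i * B i i ≤ ∑ i, (-log (s i) - 1) := by
  set r : ι → ℝ := fun i => √(s i)
  have hr_sq (i : ι) : r i * r i = s i := mul_self_sqrt (hs i).le
  have hC := hB.diagonal_mul_mul_diagonal fun i => sqrt_pos.mpr (hs i)
  have hdet : (diagonal r * B * diagonal r).det = (∏ i, s i) * B.det := by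
    simp only [det_mul, det_diagonal, ← hr_sq, Finset.prod_mul_distrib]
    ring
  have htrace : (diagonal r * B * diagonal r).trace = ∑ i, s i * B i i :=
    Finset.sum_congr rfl fun i _ => by
      simp only [diag_apply, mul_diagonal, diagonal_mul, ← hr_sq]
      ring
  have key := hC.log_det_le_trace_sub_card
  rw [hdet, htrace, log_mul (Finset.prod_pos fun i _ => hs i).ne' hB.det_pos.ne',
    log_prod fun i _ => (hs i).ne'] at key
  simp only [Finset.sum_sub_distrib, Finset.sum_neg_distrib, Finset.sum_const, Finset.card_univ,
    nsmul_eq_mul, mul_one]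
  linarith

end Matrix.PosDef

/-- Determinant–diagonal likelihood bound: for positive definite `A` and
positive reals `s i`, `(n/2)·log det A⁻¹ − (n/2)·∑ s_i·(A⁻¹)_{ii}
≤ (n/2)·∑ (−log s_i − 1)`. -/
theorem det_diagonal_likelihood_bound (d : ℕ) (n : ℝ) (hn : 0 < n)
    (A : Matrix (Fin d) (Fin d) ℝ) (hA : A.PosDef)
    (s : Fin d → ℝ) (hs : ∀ i, 0 < s i) :
    (n / 2) * Real.log (A⁻¹).det - (n / 2) * ∑ i, s i * A⁻¹ i i ≤
      (n / 2) * ∑ i, (-Real.log (s i) - 1) := by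
  rw [← mul_sub]
  exact mul_le_mul_of_nonneg_left (hA.inv.log_det_sub_sum_mul_diag_le hs) (by positivity)
end

section
/- Strict concavity of the QC objective in the precision variable: the function P ↦ (n/2)·log det(P) − (n/2)·tr(S P) − (1/4)·tr(P(Θ ∘ P)) is strictly concave on the cone of symmetric positive definite matrices P, provided Θ has nonnegative entries; consequently any critical point is the unique global maximizer. -/
open Matrix Real

/-!
Write `P = Cᴴ C` with `C` invertible and `Q = Cᴴ M C`. Along the segment from `P` to `Q`,
`log det (a P + b Q) - a log det P - b log det Q = ∑ᵢ (log (a + b μᵢ) - b log μᵢ)` over the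
eigenvalues `μᵢ > 0` of `M`, and by strict concavity of `log` each term is positive unless
`μᵢ = 1`; all `μᵢ = 1` would force `M = 1`, i.e. `P = Q`. So `log det` is strictly concave on
the positive definite cone. The trace term is linear, and on symmetric matrices
`tr (P (Θ ∘ P)) = ∑ᵢⱼ Θᵢⱼ Pᵢⱼ²` is convex when `Θ ≥ 0`. A strictly concave function has at
most one maximizer.
-/

theorem ConvexOn.sum {𝕜 E β ι : Type*} [Semiring 𝕜] [PartialOrder 𝕜] [AddCommMonoid E]
    [AddCommMonoid β] [PartialOrder β] [IsOrderedAddMonoid β] [SMul 𝕜 E] [Module 𝕜 β]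
    {s : Set E} {t : Finset ι} {f : ι → E → β} (hs : Convex 𝕜 s)
    (hf : ∀ i ∈ t, ConvexOn 𝕜 s (f i)) : ConvexOn 𝕜 s fun x => ∑ i ∈ t, f i x := by
  classical
  induction t using Finset.induction_on with
  | empty => simpa using convexOn_const 0 hs
  | insert i t hi ih =>
    simp_rw [Finset.sum_insert hi]
    exact (hf i (t.mem_insert_self i)).add (ih fun j hj => hf j (Finset.mem_insert_of_mem hj))

theorem StrictConcaveOn.const_mul {E : Type*} [AddCommMonoid E] [Module ℝ E] {s : Set E}
    {f : E → ℝ} {c : ℝ} (hc : 0 < c) (hf : StrictConcaveOn ℝ s f) :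
    StrictConcaveOn ℝ s fun x => c * f x := by
  refine ⟨hf.1, fun x hx y hy hxy a b ha hb hab => ?_⟩
  have := mul_lt_mul_of_pos_left (hf.2 hx hy hxy ha hb hab) hc
  simp only [smul_eq_mul] at this ⊢
  linarith

theorem mul_log_lt_log_add_mul {a b x : ℝ} (ha : 0 < a) (hb : 0 < b) (hab : a + b = 1)
    (hx : 0 < x) (hx1 : x ≠ 1) : b * log x < log (a + b * x) := by
  simpa using strictConcaveOn_log_Ioi.2 (Set.mem_Ioi.mpr one_pos) (Set.mem_Ioi.mpr hx)
    hx1.symm ha hb hab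

theorem mul_log_le_log_add_mul {a b x : ℝ} (ha : 0 < a) (hb : 0 < b) (hab : a + b = 1)
    (hx : 0 < x) : b * log x ≤ log (a + b * x) := by
  rcases eq_or_ne x 1 with rfl | hx1
  · simp [hab]
  · exact (mul_log_lt_log_add_mul ha hb hab hx hx1).le

namespace Matrix

section Convex

open scoped ComplexOrder

variable {𝕜 m : Type*} [RCLike 𝕜]

theorem convex_setOf_posDef : Convex ℝ {P : Matrix m m 𝕜 | P.PosDef} :=
  convex_iff_forall_pos.mpr fun _ hP _ hQ _ _ ha hb _ => (hP.smul ha).add (hQ.smul hb)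

theorem convex_setOf_isSymm : Convex ℝ {P : Matrix m m ℝ | P.IsSymm} :=
  fun _ hP _ hQ a b _ _ _ => (hP.smul a).add (hQ.smul b)

theorem PosDef.isSymm {P : Matrix m m ℝ} (hP : P.PosDef) : P.IsSymm :=
  IsSymm.ext fun i j => hP.isHermitian.apply i j

end Convex

section Hadamard

variable {m n : Type*} [Fintype m] [Fintype n]

theorem trace_mul_hadamard_of_isSymm {R : Type*} [CommSemiring R] {P : Matrix n n R}
    (hP : P.IsSymm) (Θ : Matrix n n R) : (P * Θ ⊙ P).trace = ∑ i, ∑ j, Θ i j * P i j ^ 2 := by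
  simp only [trace, diag, mul_apply, hadamard_apply]
  rw [Finset.sum_comm]
  refine Finset.sum_congr rfl fun i _ => Finset.sum_congr rfl fun j _ => ?_
  rw [hP.apply]
  ring

theorem convexOn_sum_mul_sq (w : Matrix m n ℝ) (hw : ∀ i j, 0 ≤ w i j) :
    ConvexOn ℝ Set.univ fun P : Matrix m n ℝ => ∑ i, ∑ j, w i j * P i j ^ 2 :=
  ConvexOn.sum convex_univ fun i _ => ConvexOn.sum convex_univ fun j _ =>
    ConvexOn.smul (hw i j)
      ((Even.convexOn_pow (𝕜 := ℝ) even_two).comp_linearMap (entryLinearMap ℝ ℝ i j) :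
        ConvexOn ℝ Set.univ fun P : Matrix m n ℝ => P i j ^ 2)

theorem convexOn_trace_mul_hadamard {Θ : Matrix n n ℝ} (hΘ : ∀ i j, 0 ≤ Θ i j) :
    ConvexOn ℝ {P : Matrix n n ℝ | P.IsSymm} fun P => (P * Θ ⊙ P).trace :=
  ((convexOn_sum_mul_sq Θ hΘ).subset (Set.subset_univ _) convex_setOf_isSymm).congr
    fun _ hP => (trace_mul_hadamard_of_isSymm hP Θ).symm

end Hadamard

section LogDet

variable {n : Type*} [Fintype n] [DecidableEq n]

theorem PosDef.exists_isUnit_eq_conjTranspose_mul_self {P : Matrix n n ℝ} (hP : P.PosDef) :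
    ∃ C : Matrix n n ℝ, IsUnit C ∧ P = Cᴴ * C := by
  open scoped MatrixOrder in
  exact CStarAlgebra.isStrictlyPositive_iff_eq_star_mul_self.mp hP.isStrictlyPositive

theorem IsHermitian.det_cfc {A : Matrix n n ℝ} (hA : A.IsHermitian) (f : ℝ → ℝ) :
    (cfc f A).det = ∏ i, f (hA.eigenvalues i) := by
  rw [hA.cfc_eq]
  simp [IsHermitian.cfc, -Unitary.conjStarAlgAut_apply]

theorem IsHermitian.smul_one_add_smul_eq_cfc {A : Matrix n n ℝ} (hA : A.IsHermitian)
    (a b : ℝ) : a • 1 + b • A = cfc (fun x => a + b * x) A := by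
  rw [cfc_add .., cfc_const_mul .., cfc_const .., cfc_id' ..]
  simp [Algebra.algebraMap_eq_smul_one]

theorem IsHermitian.eq_one_of_eigenvalues_eq_one {A : Matrix n n ℝ} (hA : A.IsHermitian)
    (h : ∀ i, hA.eigenvalues i = 1) : A = 1 :=
  calc A = cfc id A := (cfc_id' ℝ A).symm
    _ = cfc (fun _ => 1) A := cfc_congr fun x hx => by
      rw [hA.spectrum_real_eq_range_eigenvalues] at hx
      obtain ⟨i, rfl⟩ := hx
      exact h i
    _ = 1 := cfc_const_one ℝ A

theorem PosDef.mul_log_det_lt_log_det_smul_one_add_smul {M : Matrix n n ℝ} (hM : M.PosDef)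
    (hM1 : M ≠ 1) {a b : ℝ} (ha : 0 < a) (hb : 0 < b) (hab : a + b = 1) :
    b * log M.det < log (a • 1 + b • M).det := by
  set μ := hM.isHermitian.eigenvalues
  have hμ : ∀ i, 0 < μ i := hM.eigenvalues_pos
  obtain ⟨k, hk⟩ : ∃ k, μ k ≠ 1 := by
    by_contra! h
    exact hM1 (hM.isHermitian.eq_one_of_eigenvalues_eq_one h)
  have hdet : (a • 1 + b • M).det = ∏ i, (a + b * μ i) := by
    rw [hM.isHermitian.smul_one_add_smul_eq_cfc, hM.isHermitian.det_cfc]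
  have hdetM : M.det = ∏ i, μ i := by simpa using hM.isHermitian.det_eq_prod_eigenvalues
  rw [hdet, hdetM, log_prod fun i _ => (hμ i).ne',
    log_prod fun i _ => (add_pos ha (mul_pos hb (hμ i))).ne', Finset.mul_sum]
  exact Finset.sum_lt_sum (fun i _ => mul_log_le_log_add_mul ha hb hab (hμ i))
    ⟨k, Finset.mem_univ k, mul_log_lt_log_add_mul ha hb hab (hμ k) hk⟩

theorem strictConcaveOn_log_det :
    StrictConcaveOn ℝ {P : Matrix n n ℝ | P.PosDef} fun P => log P.det := by
  refine ⟨convex_setOf_posDef, fun P hP Q hQ hPQ a b ha hb hab => ?_⟩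
  obtain ⟨C, hC, rfl⟩ := hP.exists_isUnit_eq_conjTranspose_mul_self
  have hCdet : IsUnit C.det := (isUnit_iff_isUnit_det C).mp hC
  set M := (C⁻¹)ᴴ * Q * C⁻¹
  have hQM : Q = Cᴴ * M * C := by
    simp only [M, conjTranspose_nonsing_inv, Matrix.mul_assoc, nonsing_inv_mul _ hCdet,
      Matrix.mul_one]
    rw [← Matrix.mul_assoc, mul_nonsing_inv _ (by simpa using hCdet), Matrix.one_mul]
  have hM : M.PosDef :=
    hQ.conjTranspose_mul_mul_same (mulVec_injective_of_isUnit (isUnit_nonsing_inv_iff.mpr hC))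
  have hM1 : M ≠ 1 := fun h => hPQ (by rw [hQM, h, Matrix.mul_one])
  have hseg : a • (Cᴴ * C) + b • Q = Cᴴ * (a • 1 + b • M) * C := by
    rw [hQM]
    simp only [Matrix.mul_add, Matrix.add_mul, Matrix.mul_smul, Matrix.smul_mul, Matrix.mul_one]
  have hdet : ∀ X : Matrix n n ℝ, (Cᴴ * X * C).det = (Cᴴ * C).det * X.det := fun X => by
    simp only [det_mul]
    ring
  have hsegdet : 0 < (a • (1 : Matrix n n ℝ) + b • M).det :=
    ((PosDef.one.smul ha).add (hM.smul hb)).det_pos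
  simp only [smul_eq_mul]
  rw [hseg, hQM, hdet, hdet, log_mul hP.det_pos.ne' hM.det_pos.ne',
    log_mul hP.det_pos.ne' hsegdet.ne']
  linear_combination hM.mul_log_det_lt_log_det_smul_one_add_smul hM1 ha hb hab
    + log (Cᴴ * C).det * hab

end LogDet

end Matrix

theorem qc_objective_strictly_concave_general (d : ℕ) (n : ℝ) (hn : 0 < n)
    (S Θ : Matrix (Fin d) (Fin d) ℝ)
    (hΘnonneg : ∀ i j, 0 ≤ Θ i j)
    (g : Matrix (Fin d) (Fin d) ℝ → ℝ)
    (hg : ∀ P : Matrix (Fin d) (Fin d) ℝ,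
      g P = (n / 2) * Real.log P.det - (n / 2) * (S * P).trace
        - (1 / 4) * (P * Matrix.hadamard Θ P).trace) :
    StrictConcaveOn ℝ {P : Matrix (Fin d) (Fin d) ℝ | P.PosDef} g ∧
      ∀ P Q : Matrix (Fin d) (Fin d) ℝ, P.PosDef → Q.PosDef →
        IsMaxOn g {P : Matrix (Fin d) (Fin d) ℝ | P.PosDef} P →
        IsMaxOn g {P : Matrix (Fin d) (Fin d) ℝ | P.PosDef} Q → P = Q := by
  have hconc : StrictConcaveOn ℝ {P : Matrix (Fin d) (Fin d) ℝ | P.PosDef} g := by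
    obtain rfl : g = _ := funext hg
    have hlin : ConvexOn ℝ {P : Matrix (Fin d) (Fin d) ℝ | P.PosDef}
        fun P => n / 2 * (S * P).trace :=
      ((traceLinearMap (Fin d) ℝ ℝ ∘ₗ LinearMap.mulLeft ℝ S).convexOn convex_setOf_posDef).smul
        (by positivity)
    have hquad : ConvexOn ℝ {P : Matrix (Fin d) (Fin d) ℝ | P.PosDef}
        fun P => 1 / 4 * (P * Θ ⊙ P).trace :=
      ((convexOn_trace_mul_hadamard hΘnonneg).subset (fun _ => PosDef.isSymm)
        convex_setOf_posDef).smul (by norm_num)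
    exact ((strictConcaveOn_log_det.const_mul (by positivity)).sub_convexOn hlin).sub_convexOn hquad
  exact ⟨hconc, fun P Q hP hQ hmP hmQ => hconc.eq_of_isMaxOn hmP hmQ hP hQ⟩

/-- Strict concavity of the QC objective in the precision variable: the function
`P ↦ (n/2)·log det P − (n/2)·tr(S P) − (1/4)·tr(P(Θ ∘ P))` is strictly concave on
the cone of positive definite matrices when `Θ` has nonnegative entries, and
consequently it has at most one maximizer over this cone. -/
theorem qc_objective_strictly_concave (d : ℕ) (n : ℝ) (hn : 0 < n)
    (S Θ : Matrix (Fin d) (Fin d) ℝ) (hSsymm : S.IsSymm) (hΘsymm : Θ.IsSymm)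
    (hΘnonneg : ∀ i j, 0 ≤ Θ i j)
    (g : Matrix (Fin d) (Fin d) ℝ → ℝ)
    (hg : ∀ P : Matrix (Fin d) (Fin d) ℝ,
      g P = (n / 2) * Real.log P.det - (n / 2) * (S * P).trace
        - (1 / 4) * (P * Matrix.hadamard Θ P).trace) :
    StrictConcaveOn ℝ {P : Matrix (Fin d) (Fin d) ℝ | P.PosDef} g ∧
      ∀ P Q : Matrix (Fin d) (Fin d) ℝ, P.PosDef → Q.PosDef →
        IsMaxOn g {P : Matrix (Fin d) (Fin d) ℝ | P.PosDef} P →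
        IsMaxOn g {P : Matrix (Fin d) (Fin d) ℝ | P.PosDef} Q → P = Q :=
  qc_objective_strictly_concave_general d n hn S Θ hΘnonneg g hg
end

section
/- Existence and uniqueness of the QC maximizer for strong penalization: assume the diagonal of the symmetric matrix S is strictly positive, and Θ = s·Θ_ref where Θ_ref has strictly positive off-diagonal entries and zero diagonal. Then for all sufficiently large s > 0, the function ℓ(Σ) = (n/2)·log det(Σ⁻¹) − (n/2)·tr(S Σ⁻¹) − (1/4)·tr(Σ⁻¹(Θ ∘ Σ⁻¹)) has a unique global maximizer over symmetric positive definite matrices Σ. -/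
open Matrix Real

/-!
In the precision matrix `K = Σ⁻¹` the objective reads
`n/2 · log det K − ∑ᵢⱼ (n/2 · Sᵢⱼ Kᵢⱼ + Θⱼᵢ Kᵢⱼ² / 4)`. Completing the square in the off-diagonal
entries (where `Θ > 0`) and using `Sᵢᵢ > 0` on the diagonal bounds it by
`n/2 · (log det K − c · tr K) + C`; as `log det K ≤ d · log tr K`, each superlevel set has bounded
trace and determinant bounded away from `0`, hence is a compact subset of the positive definite
cone, and a maximizer exists. It is unique because `log det` is strictly concave while the other
terms are convex (`Θ ≥ 0`).
-/

namespace Matrix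

variable {ι : Type*}

lemma PosSemidef.apply_mul_apply_le {K : Matrix ι ι ℝ} (hK : K.PosSemidef) (i j : ι) :
    K i j * K j i ≤ K i i * K j j := by
  have := (hK.submatrix ![i, j]).det_nonneg
  rw [det_fin_two] at this
  simpa [sub_nonneg] using this

variable [Fintype ι]

lemma PosSemidef.abs_apply_le_trace {K : Matrix ι ι ℝ} (hK : K.PosSemidef) (i j : ι) :
    |K i j| ≤ K.trace := by
  have hdiag : ∀ k, K k k ≤ K.trace := fun k =>
    Finset.single_le_sum (f := fun l => K l l) (fun l _ => hK.diag_nonneg) (Finset.mem_univ k)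
  have hsymm : K j i = K i j := by simpa using hK.isHermitian.apply i j
  refine abs_le_of_sq_le_sq ?_ hK.trace_nonneg
  have := hK.apply_mul_apply_le i j
  rw [hsymm] at this
  nlinarith [hdiag i, hdiag j, hK.diag_nonneg (i := i), hK.diag_nonneg (i := j)]

lemma isClosed_setOf_posSemidef : IsClosed {K : Matrix ι ι ℝ | K.PosSemidef} := by
  simp only [posSemidef_iff_dotProduct_mulVec, Set.ofPred_and, Set.ofPred_forall]
  exact (isClosed_eq continuous_id.matrix_conjTranspose continuous_id).inter <|
    isClosed_iInter fun x => isClosed_le continuous_const <|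
      continuous_const.dotProduct (continuous_id.matrix_mulVec continuous_const)

variable [DecidableEq ι]

lemma isCompact_setOf_posSemidef_trace_le_det_ge (b δ : ℝ) :
    IsCompact {K : Matrix ι ι ℝ | K.PosSemidef ∧ K.trace ≤ b ∧ δ ≤ K.det} := by
  have hbox : IsCompact (Set.univ.pi fun _ : ι => Set.univ.pi fun _ : ι => Set.Icc (-b) b) :=
    isCompact_univ_pi fun _ => isCompact_univ_pi fun _ => isCompact_Icc
  refine hbox.of_isClosed_subset ?_ fun K ⟨hK, hb, _⟩ i _ j _ =>
    abs_le.mp ((hK.abs_apply_le_trace i j).trans hb)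
  simp only [Set.ofPred_and]
  exact isClosed_setOf_posSemidef.inter <|
    (isClosed_le continuous_id.matrix_trace continuous_const).inter
      (isClosed_le continuous_const continuous_id.matrix_det)

lemma PosSemidef.det_le_trace_pow {K : Matrix ι ι ℝ} (hK : K.PosSemidef) :
    K.det ≤ K.trace ^ Fintype.card ι := by
  have hμ : ∀ i, 0 ≤ hK.isHermitian.eigenvalues i := hK.eigenvalues_nonneg
  have htr : K.trace = ∑ i, hK.isHermitian.eigenvalues i := by
    simpa using hK.isHermitian.trace_eq_sum_eigenvalues
  calc K.det = ∏ i, hK.isHermitian.eigenvalues i := by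
        simpa using hK.isHermitian.det_eq_prod_eigenvalues
    _ ≤ ∏ _i : ι, K.trace := Finset.prod_le_prod (fun i _ => hμ i)
        fun i _ => htr ▸ Finset.single_le_sum (fun j _ => hμ j) (Finset.mem_univ i)
    _ = K.trace ^ Fintype.card ι := by rw [Finset.prod_const, Finset.card_univ]

lemma IsHermitian.det_one_add {N : Matrix ι ι ℝ} (hN : N.IsHermitian) :
    (1 + N).det = ∏ i, (1 + hN.eigenvalues i) := by
  set U : Matrix ι ι ℝ := (hN.eigenvectorUnitary : Matrix ι ι ℝ)
  have hUU : star U * U = 1 := Unitary.coe_star_mul_self _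
  conv_lhs =>
    rw [hN.spectral_theorem, ← map_one (Unitary.conjStarAlgAut ℝ _ hN.eigenvectorUnitary),
      ← map_add, Unitary.conjStarAlgAut_apply, det_mul_comm, ← Matrix.mul_assoc, hUU,
      Matrix.one_mul, ← diagonal_one, diagonal_add, det_diagonal]
  simp

lemma IsHermitian.eq_one_of_eigenvalues_eq_one_s17 {N : Matrix ι ι ℝ} (hN : N.IsHermitian)
    (h : ∀ i, hN.eigenvalues i = 1) : N = 1 := by
  rw [hN.spectral_theorem, show RCLike.ofReal ∘ hN.eigenvalues = 1 from funext h]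
  exact (congrArg _ diagonal_one).trans (map_one _)

lemma PosDef.det_lt_det_midpoint_one_sq {N : Matrix ι ι ℝ} (hN : N.PosDef) (hN1 : N ≠ 1) :
    N.det < ((1 / 2 : ℝ) • (1 + N)).det ^ 2 := by
  obtain ⟨i₀, hi₀⟩ : ∃ i, hN.isHermitian.eigenvalues i ≠ 1 := by
    by_contra! h
    exact hN1 (hN.isHermitian.eq_one_of_eigenvalues_eq_one_s17 h)
  have hμ := hN.eigenvalues_pos
  calc N.det = ∏ i, hN.isHermitian.eigenvalues i := by
        simpa using hN.isHermitian.det_eq_prod_eigenvalues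
    _ < ∏ i, ((1 + hN.isHermitian.eigenvalues i) / 2) ^ 2 := by
      refine Finset.prod_lt_prod (fun i _ => hμ i) (fun i _ => ?_) ⟨i₀, Finset.mem_univ _, ?_⟩
      · nlinarith [sq_nonneg (1 - hN.isHermitian.eigenvalues i)]
      · nlinarith [mul_self_pos.mpr (sub_ne_zero.mpr hi₀)]
    _ = ((1 / 2 : ℝ) • (1 + N)).det ^ 2 := by
      rw [det_smul, hN.isHermitian.det_one_add, Finset.prod_pow, Finset.prod_div_distrib,
        Finset.prod_const, Finset.card_univ, one_div, inv_pow, div_eq_inv_mul]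

open scoped MatrixOrder in
/-- Congruence by `√K` reduces this to the case `K = 1`, which is `μ < ((1 + μ) / 2) ^ 2` for the
eigenvalues `μ ≠ 1` of `L`. -/
lemma PosDef.det_mul_det_lt_det_midpoint_sq {K L : Matrix ι ι ℝ} (hK : K.PosDef) (hL : L.PosDef)
    (hKL : K ≠ L) : K.det * L.det < ((1 / 2 : ℝ) • (K + L)).det ^ 2 := by
  set R := CFC.sqrt K
  have hR : R.IsHermitian := (CFC.sqrt_nonneg K).posSemidef.isHermitian
  have hRR : R * R = K := CFC.sqrt_mul_sqrt_self K hK.posSemidef.nonneg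
  have hRdet : R.det * R.det = K.det := by rw [← det_mul, hRR]
  have hRunit : IsUnit R.det := by
    rw [isUnit_iff_ne_zero]
    intro h
    simp [h, hK.det_pos.ne] at hRdet
  set N := R⁻¹ * L * R⁻¹
  have hRN : R * N * R = L := by
    simp only [N, ← Matrix.mul_assoc, Matrix.mul_nonsing_inv _ hRunit, Matrix.one_mul]
    rw [Matrix.mul_assoc, Matrix.nonsing_inv_mul _ hRunit, Matrix.mul_one]
  have hN : N.PosDef := by
    rw [← IsUnit.posDef_star_left_conjugate_iff ((isUnit_iff_isUnit_det R).mpr hRunit)]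
    rwa [star_eq_conjTranspose, hR.eq, hRN]
  have hN1 : N ≠ 1 := by
    intro h
    exact hKL (by rw [← hRN, h, Matrix.mul_one, hRR])
  have hmid : (1 / 2 : ℝ) • (K + L) = R * ((1 / 2 : ℝ) • (1 + N)) * R := by
    rw [← hRR, ← hRN]
    simp only [Matrix.mul_smul, Matrix.smul_mul, Matrix.mul_add, Matrix.add_mul, Matrix.mul_one,
      Matrix.mul_assoc]
  rw [hmid, det_mul, det_mul, ← hRN, det_mul, det_mul, ← hRdet]
  have hNdet := hN.det_lt_det_midpoint_one_sq hN1
  have hpos : 0 < (R.det * R.det) ^ 2 := hRdet ▸ pow_pos hK.det_pos 2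
  nlinarith

lemma existsUnique_posDef_isMax_comp_inv {f : Matrix ι ι ℝ → ℝ}
    (h : ∃! K : Matrix ι ι ℝ, K.PosDef ∧ ∀ B, B.PosDef → f B ≤ f K) :
    ∃! A : Matrix ι ι ℝ, A.PosDef ∧ ∀ B, B.PosDef → f B⁻¹ ≤ f A⁻¹ := by
  have hinv : ∀ B : Matrix ι ι ℝ, B.PosDef → B⁻¹⁻¹ = B := fun B hB =>
    nonsing_inv_nonsing_inv B ((isUnit_iff_isUnit_det B).mp hB.isUnit)
  obtain ⟨K, ⟨hK, hmax⟩, huniq⟩ := h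
  refine ⟨K⁻¹, ⟨hK.inv, fun B hB => (hinv K hK).symm ▸ hmax _ hB.inv⟩, fun A ⟨hA, hAmax⟩ => ?_⟩
  rw [← huniq A⁻¹ ⟨hA.inv, fun B hB => hinv B hB ▸ hAmax _ hB.inv⟩, hinv A hA]

end Matrix

open Filter Asymptotics in
lemma Real.exists_le_of_le_mul_log_sub_mul (a : ℝ) {c : ℝ} (hc : 0 < c) (C : ℝ) :
    ∃ b, ∀ T, C ≤ a * log T - c * T → T ≤ b := by
  have hlin : Tendsto (fun T : ℝ => -c * T) atTop atBot :=
    tendsto_id.const_mul_atTop_of_neg (neg_neg_of_pos hc)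
  have hlog : (fun T => a * log T) =o[atTop] fun T : ℝ => -c * T :=
    (isLittleO_log_id_atTop.const_mul_left a).const_mul_right (neg_ne_zero.mpr hc.ne')
  have hlim := (hlog.add_isEquivalent IsEquivalent.refl).symm.tendsto_atBot hlin
  obtain ⟨b, hb⟩ := eventually_atTop.mp (hlim.eventually_lt_atBot C)
  refine ⟨b, fun T hT => le_of_not_gt fun hbT => ?_⟩
  have := hb T hbT.le
  simp only [Pi.add_apply] at this
  linarith

lemma Finite.exists_pos_le_of_pos {ι : Type*} [Finite ι] {a : ι → ℝ} (ha : ∀ i, 0 < a i) :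
    ∃ c, 0 < c ∧ ∀ i, c ≤ a i := by
  cases isEmpty_or_nonempty ι
  · exact ⟨1, one_pos, isEmptyElim⟩
  · obtain ⟨i₀, hi₀⟩ := Finite.exists_min a
    exact ⟨a i₀, ha i₀, hi₀⟩

lemma IsCompact.exists_isMaxOn_of_superlevel_subset {X : Type*} [TopologicalSpace X] {f : X → ℝ}
    {U T : Set X} (hT : IsCompact T) (hTU : T ⊆ U) (hf : ContinuousOn f T) {x₀ : X} (hx₀ : x₀ ∈ T)
    (hsub : ∀ x ∈ U, f x₀ ≤ f x → x ∈ T) : ∃ x ∈ U, IsMaxOn f U x := by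
  obtain ⟨x, hxT, hx⟩ := hT.exists_isMaxOn ⟨x₀, hx₀⟩ hf
  refine ⟨x, hTU hxT, fun y hy => ?_⟩
  by_cases hy₀ : f x₀ ≤ f y
  · exact hx (hsub y hy hy₀)
  · exact (le_of_not_ge hy₀).trans (hx hx₀)

section QCObjective

variable {ι : Type*} [Fintype ι] [DecidableEq ι] {n : ℝ} {S Θ : Matrix ι ι ℝ}

/-- The QC log-posterior `ℓ` written in the precision matrix `K = Σ⁻¹`. -/
noncomputable def qcPrecisionObjective (n : ℝ) (S Θ K : Matrix ι ι ℝ) : ℝ :=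
  (n / 2) * Real.log K.det - (n / 2) * (S * K).trace - (1 / 4) * (K * Matrix.hadamard Θ K).trace

lemma qcPrecisionObjective_eq {K : Matrix ι ι ℝ} (hK : K.IsHermitian) :
    qcPrecisionObjective n S Θ K =
      n / 2 * Real.log K.det - ∑ i, ∑ j, (n / 2 * S i j * K i j + Θ j i * K i j ^ 2 / 4) := by
  have hsymm : ∀ i j, K j i = K i j := fun i j => by simpa using hK.apply i j
  simp only [qcPrecisionObjective, trace, diag, mul_apply, hadamard_apply, hsymm, Finset.mul_sum,
    ← Finset.sum_add_distrib, sub_sub]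
  congr 1
  refine Finset.sum_congr rfl fun i _ => Finset.sum_congr rfl fun j _ => ?_
  ring

lemma exists_qcPrecisionObjective_le (hn : 0 ≤ n) {c : ℝ} (hc : ∀ i, c ≤ S i i)
    (hΘ : ∀ i j, i ≠ j → 0 < Θ i j) (hΘdiag : ∀ i, 0 ≤ Θ i i) :
    ∃ C, ∀ K : Matrix ι ι ℝ, K.PosDef →
      qcPrecisionObjective n S Θ K ≤ n / 2 * Real.log K.det - n / 2 * c * K.trace + C := by
  refine ⟨∑ i, ∑ j, if i = j then 0 else (n / 2 * S i j) ^ 2 / Θ j i, fun K hK => ?_⟩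
  have hentry : ∀ i j, n / 2 * c * (if i = j then K i i else 0)
      - (if i = j then 0 else (n / 2 * S i j) ^ 2 / Θ j i)
      ≤ n / 2 * S i j * K i j + Θ j i * K i j ^ 2 / 4 := by
    intro i j
    split_ifs with hij
    · subst hij
      have hKii : 0 ≤ K i i := hK.posSemidef.diag_nonneg
      nlinarith [mul_nonneg (mul_nonneg hn hKii) (sub_nonneg.mpr (hc i)),
        mul_nonneg (hΘdiag i) (sq_nonneg (K i i))]
    · have hθ := hΘ j i (Ne.symm hij)
      have hsq : (Θ j i * K i j / 2 + n / 2 * S i j) ^ 2 / Θ j i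
          = n / 2 * S i j * K i j + Θ j i * K i j ^ 2 / 4 + (n / 2 * S i j) ^ 2 / Θ j i := by
        field_simp
        ring
      have : 0 ≤ (Θ j i * K i j / 2 + n / 2 * S i j) ^ 2 / Θ j i := by positivity
      linarith
  have hsum := Finset.sum_le_sum fun i (_ : i ∈ Finset.univ) =>
    Finset.sum_le_sum fun j (_ : j ∈ Finset.univ) => hentry i j
  simp only [Finset.sum_sub_distrib, ← Finset.mul_sum, Finset.sum_ite_eq, Finset.mem_univ,
    if_true] at hsum
  rw [qcPrecisionObjective_eq hK.isHermitian, show K.trace = ∑ i, K i i from rfl]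
  linarith

lemma exists_bounds_of_le_qcPrecisionObjective (hn : 0 < n) (hS : ∀ i, 0 < S i i)
    (hΘ : ∀ i j, i ≠ j → 0 < Θ i j) (hΘdiag : ∀ i, 0 ≤ Θ i i) (v : ℝ) :
    ∃ b δ, 0 < δ ∧ ∀ K : Matrix ι ι ℝ, K.PosDef → v ≤ qcPrecisionObjective n S Θ K →
      K.trace ≤ b ∧ δ ≤ K.det := by
  obtain ⟨c, hc, hcS⟩ := Finite.exists_pos_le_of_pos hS
  obtain ⟨C, hC⟩ := exists_qcPrecisionObjective_le hn.le hcS hΘ hΘdiag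
  obtain ⟨b, hb⟩ := Real.exists_le_of_le_mul_log_sub_mul (Fintype.card ι) hc (2 * (v - C) / n)
  refine ⟨b, Real.exp (2 * (v - C) / n), Real.exp_pos _, fun K hK hv => ⟨hb _ ?_, ?_⟩⟩
  · have hlog : Real.log K.det ≤ Fintype.card ι * Real.log K.trace := by
      rw [← Real.log_pow]
      exact Real.log_le_log hK.det_pos hK.posSemidef.det_le_trace_pow
    rw [div_le_iff₀ hn]
    nlinarith [hC K hK]
  · rw [← Real.le_log_iff_exp_le hK.det_pos, div_le_iff₀ hn]
    nlinarith [hC K hK, mul_nonneg (mul_nonneg hn.le hc.le) hK.posSemidef.trace_nonneg]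

lemma continuousOn_qcPrecisionObjective :
    ContinuousOn (qcPrecisionObjective n S Θ) {K | K.det ≠ 0} := by
  unfold qcPrecisionObjective
  have hdet : ContinuousOn (fun K : Matrix ι ι ℝ => Real.log K.det) {K | K.det ≠ 0} :=
    continuous_id.matrix_det.continuousOn.log fun _ hK => hK
  refine ((hdet.const_mul _).sub ?_).sub ?_ <;> apply Continuous.continuousOn
  · exact continuous_const.mul (continuous_const.matrix_mul continuous_id).matrix_trace
  · exact continuous_const.mul (continuous_id.matrix_mul <| continuous_matrix
      fun i j => continuous_const.mul (continuous_id.matrix_elem i j)).matrix_trace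

lemma exists_isMaxOn_qcPrecisionObjective (hn : 0 < n) (hS : ∀ i, 0 < S i i)
    (hΘ : ∀ i j, i ≠ j → 0 < Θ i j) (hΘdiag : ∀ i, 0 ≤ Θ i i) :
    ∃ K ∈ {K : Matrix ι ι ℝ | K.PosDef},
      IsMaxOn (qcPrecisionObjective n S Θ) {K | K.PosDef} K := by
  obtain ⟨b, δ, hδ, hsup⟩ :=
    exists_bounds_of_le_qcPrecisionObjective hn hS hΘ hΘdiag (qcPrecisionObjective n S Θ 1)
  have hpos : ∀ K : Matrix ι ι ℝ, δ ≤ K.det → K.det ≠ 0 := fun K hK => (hδ.trans_le hK).ne'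
  refine (isCompact_setOf_posSemidef_trace_le_det_ge b δ).exists_isMaxOn_of_superlevel_subset
    (fun K ⟨hK, _, hKδ⟩ => hK.posDef_iff_det_ne_zero.mpr (hpos K hKδ))
    (continuousOn_qcPrecisionObjective.mono fun K hK => hpos K hK.2.2)
    ⟨PosSemidef.one, hsup 1 PosDef.one le_rfl⟩ fun K hK hv => ⟨hK.posSemidef, hsup K hK hv⟩

lemma qcPrecisionObjective_add_lt_two_mul_midpoint (hn : 0 < n) (hΘ : ∀ i j, 0 ≤ Θ i j)
    {K L : Matrix ι ι ℝ} (hK : K.PosDef) (hL : L.PosDef) (hKL : K ≠ L) :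
    qcPrecisionObjective n S Θ K + qcPrecisionObjective n S Θ L
      < 2 * qcPrecisionObjective n S Θ ((1 / 2 : ℝ) • (K + L)) := by
  set M := (1 / 2 : ℝ) • (K + L)
  have hM : M.PosDef := (hK.add hL).smul (by norm_num)
  have hlog : Real.log K.det + Real.log L.det < 2 * Real.log M.det := by
    rw [← Real.log_mul hK.det_pos.ne' hL.det_pos.ne', ← Nat.cast_ofNat, ← Real.log_pow]
    exact Real.log_lt_log (mul_pos hK.det_pos hL.det_pos)
      (hK.det_mul_det_lt_det_midpoint_sq hL hKL)
  have hquad : 2 * ∑ i, ∑ j, (n / 2 * S i j * M i j + Θ j i * M i j ^ 2 / 4)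
      ≤ ∑ i, ∑ j, (n / 2 * S i j * K i j + Θ j i * K i j ^ 2 / 4)
        + ∑ i, ∑ j, (n / 2 * S i j * L i j + Θ j i * L i j ^ 2 / 4) := by
    simp only [Finset.mul_sum, ← Finset.sum_add_distrib]
    refine Finset.sum_le_sum fun i _ => Finset.sum_le_sum fun j _ => ?_
    have hMij : M i j = (K i j + L i j) / 2 := by simp [M]; ring
    rw [hMij]
    nlinarith [mul_nonneg (hΘ j i) (sq_nonneg (K i j - L i j))]
  rw [qcPrecisionObjective_eq hK.isHermitian, qcPrecisionObjective_eq hL.isHermitian,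
    qcPrecisionObjective_eq hM.isHermitian]
  nlinarith

lemma existsUnique_posDef_isMax_qcPrecisionObjective (hn : 0 < n) (hS : ∀ i, 0 < S i i)
    (hΘ : ∀ i j, i ≠ j → 0 < Θ i j) (hΘdiag : ∀ i, 0 ≤ Θ i i) :
    ∃! K : Matrix ι ι ℝ, K.PosDef ∧ ∀ B : Matrix ι ι ℝ, B.PosDef →
      qcPrecisionObjective n S Θ B ≤ qcPrecisionObjective n S Θ K := by
  have hΘnonneg : ∀ i j, 0 ≤ Θ i j := fun i j =>
    (eq_or_ne i j).elim (fun h => h ▸ hΘdiag i) fun h => (hΘ i j h).le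
  obtain ⟨K, hK, hmax⟩ := exists_isMaxOn_qcPrecisionObjective hn hS hΘ hΘdiag
  refine ⟨K, ⟨hK, fun B hB => hmax hB⟩, fun L ⟨hL, hLmax⟩ => ?_⟩
  by_contra hLK
  have hM : ((1 / 2 : ℝ) • (L + K)).PosDef := (hL.add hK).smul (by norm_num)
  have hmid := qcPrecisionObjective_add_lt_two_mul_midpoint (S := S) hn hΘnonneg hL hK hLK
  have hMK : qcPrecisionObjective n S Θ _ ≤ qcPrecisionObjective n S Θ K := hmax hM
  linarith [hLmax _ hM]

end QCObjective

theorem qc_unique_global_maximizer_general (d : ℕ) (n : ℝ) (hn : 0 < n)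
    (S Θref : Matrix (Fin d) (Fin d) ℝ)
    (hSdiag : ∀ i, 0 < S i i)
    (hΘoff : ∀ i j, i ≠ j → 0 < Θref i j) (hΘdiag : ∀ i, Θref i i = 0)
    (ℓ : ℝ → Matrix (Fin d) (Fin d) ℝ → ℝ)
    (hℓ : ∀ (s : ℝ) (A : Matrix (Fin d) (Fin d) ℝ),
      ℓ s A = (n / 2) * Real.log (A⁻¹).det - (n / 2) * (S * A⁻¹).trace
        - (1 / 4) * (A⁻¹ * Matrix.hadamard (s • Θref) A⁻¹).trace) :
    ∃ s₀ : ℝ, 0 < s₀ ∧ ∀ s : ℝ, s₀ ≤ s →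
      ∃! A : Matrix (Fin d) (Fin d) ℝ,
        A.PosDef ∧ ∀ B : Matrix (Fin d) (Fin d) ℝ, B.PosDef → ℓ s B ≤ ℓ s A := by
  refine ⟨1, one_pos, fun s hs => ?_⟩
  have hs : 0 < s := one_pos.trans_le hs
  have hℓs : ℓ s = fun A => qcPrecisionObjective n S (s • Θref) A⁻¹ := funext (hℓ s)
  rw [hℓs]
  exact existsUnique_posDef_isMax_comp_inv <|
    existsUnique_posDef_isMax_qcPrecisionObjective hn hSdiag
      (fun i j hij => mul_pos hs (hΘoff i j hij)) fun i => by simp [hΘdiag]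

/-- Existence and uniqueness of the QC maximizer for strong penalization: if the
diagonal of the symmetric matrix `S` is strictly positive and `Θ = s·Θref` with
`Θref` having strictly positive off-diagonal and zero diagonal, then for all
sufficiently large `s` the QC log posterior
`ℓ_s(A) = (n/2)·log det A⁻¹ − (n/2)·tr(S A⁻¹) − (1/4)·tr(A⁻¹((s·Θref) ∘ A⁻¹))`
has a unique global maximizer over positive definite matrices. -/
theorem qc_unique_global_maximizer (d : ℕ) (n : ℝ) (hn : 0 < n)
    (S Θref : Matrix (Fin d) (Fin d) ℝ)
    (hSsymm : S.IsSymm) (hSdiag : ∀ i, 0 < S i i)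
    (hΘsymm : Θref.IsSymm)
    (hΘoff : ∀ i j, i ≠ j → 0 < Θref i j) (hΘdiag : ∀ i, Θref i i = 0)
    (ℓ : ℝ → Matrix (Fin d) (Fin d) ℝ → ℝ)
    (hℓ : ∀ (s : ℝ) (A : Matrix (Fin d) (Fin d) ℝ),
      ℓ s A = (n / 2) * Real.log (A⁻¹).det - (n / 2) * (S * A⁻¹).trace
        - (1 / 4) * (A⁻¹ * Matrix.hadamard (s • Θref) A⁻¹).trace) :
    ∃ s₀ : ℝ, 0 < s₀ ∧ ∀ s : ℝ, s₀ ≤ s →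
      ∃! A : Matrix (Fin d) (Fin d) ℝ,
        A.PosDef ∧ ∀ B : Matrix (Fin d) (Fin d) ℝ, B.PosDef → ℓ s B ≤ ℓ s A :=
  qc_unique_global_maximizer_general d n hn S Θref hSdiag hΘoff hΘdiag ℓ hℓ
end
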